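/- arXiv:2005.13574 — 3 statements merged into one kernel-verified Lean document; each statement's English description precedes it below -/
import Mathlib

section
/- The Kashaev–Korepanov–Sergeev star-triangle map T(x,y,z) = (xy/(x+z+xyz), x+z+xyz, yz/(x+z+xyz)) satisfies the functional tetrahedron equation T^{123} ∘ T^{145} ∘ T^{246} ∘ T^{356} = T^{356} ∘ T^{246} ∘ T^{145} ∘ T^{123} on the open subset of ℂ^6 where all denominators are nonzero. -/
/- STATEMENT 0: The Kashaev–Korepanov–Sergeev star-triangle map satisfies
the functional tetrahedron equation on the open subset of ℂ⁶ where all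
denominators are nonzero. -/

/-- The star-triangle map `T(x,y,z) = (xy/d, d, yz/d)` with `d = x+z+xyz`. -/
noncomputable def starTriangle (x y z : ℂ) : ℂ × ℂ × ℂ :=
  (x * y / (x + z + x * y * z), x + z + x * y * z, y * z / (x + z + x * y * z))

/-- Denominator nonvanishing condition for one application of the map. -/
def stOk (x y z : ℂ) : Prop := x + z + x * y * z ≠ 0

abbrev V6 := ℂ × ℂ × ℂ × ℂ × ℂ × ℂ

noncomputable def T123 (v : V6) : V6 :=
  let t := starTriangle v.1 v.2.1 v.2.2.1
  (t.1, t.2.1, t.2.2, v.2.2.2.1, v.2.2.2.2.1, v.2.2.2.2.2)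

noncomputable def T145 (v : V6) : V6 :=
  let t := starTriangle v.1 v.2.2.2.1 v.2.2.2.2.1
  (t.1, v.2.1, v.2.2.1, t.2.1, t.2.2, v.2.2.2.2.2)

noncomputable def T246 (v : V6) : V6 :=
  let t := starTriangle v.2.1 v.2.2.2.1 v.2.2.2.2.2
  (v.1, t.1, v.2.2.1, t.2.1, v.2.2.2.2.1, t.2.2)

noncomputable def T356 (v : V6) : V6 :=
  let t := starTriangle v.2.2.1 v.2.2.2.2.1 v.2.2.2.2.2
  (v.1, v.2.1, t.1, v.2.2.2.1, t.2.1, t.2.2)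

def ok123 (v : V6) : Prop := stOk v.1 v.2.1 v.2.2.1
def ok145 (v : V6) : Prop := stOk v.1 v.2.2.2.1 v.2.2.2.2.1
def ok246 (v : V6) : Prop := stOk v.2.1 v.2.2.2.1 v.2.2.2.2.2
def ok356 (v : V6) : Prop := stOk v.2.2.1 v.2.2.2.2.1 v.2.2.2.2.2


/-! With `a = z + t + zst`, `b = x + z + xyz`, `p = ya + st + yrst`, `q = xy + sb + xyrs` and
`m = x + a + xp = b + t + qt`, the denominators met along the left side are `a, p/a, m, q/m` and
along the right side `b, q/b, m, p/m`; both sides equal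
`(xyr/q, q/m, yrzsm/(pq), m, p/m, rst/p)`. The denominators `q/m` and `p/m` come from the
polynomial identities `xp + zsm + xyrzs = aq` and `yzm + qt + yzrst = bp`. -/

section

variable {x y z r s t a b p q m d : ℂ}

theorem T123_mk (h : x + z + x * y * z = d) :
    T123 (x, y, z, r, s, t) = (x * y / d, d, y * z / d, r, s, t) := by
  subst h; rfl

theorem T145_mk (h : x + s + x * r * s = d) :
    T145 (x, y, z, r, s, t) = (x * r / d, y, z, d, r * s / d, t) := by
  subst h; rfl

theorem T246_mk (h : y + t + y * r * t = d) :
    T246 (x, y, z, r, s, t) = (x, y * r / d, z, d, s, r * t / d) := by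
  subst h; rfl

theorem T356_mk (h : z + t + z * s * t = d) :
    T356 (x, y, z, r, s, t) = (x, y, z * s / d, r, d, s * t / d) := by
  subst h; rfl

theorem T246_T356_mk (ha : a = z + t + z * s * t) (hp : p = y * a + s * t + y * r * s * t)
    (ha0 : a ≠ 0) :
    T246 (T356 (x, y, z, r, s, t)) = (x, y * r * a / p, z * s / a, p / a, a, r * s * t / p) := by
  rw [T356_mk ha.symm, T246_mk (d := p / a) (by rw [hp]; field_simp)]
  field_simp [Prod.ext_iff]

theorem T145_T246_T356_mk (ha : a = z + t + z * s * t) (hp : p = y * a + s * t + y * r * s * t)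
    (hm : m = x + a + x * p) (ha0 : a ≠ 0) :
    T145 (T246 (T356 (x, y, z, r, s, t))) =
      (x * p / (a * m), y * r * a / p, z * s / a, m, p / m, r * s * t / p) := by
  rw [T246_T356_mk ha hp ha0, T145_mk (d := m) (by rw [hm]; field_simp)]
  field_simp [Prod.ext_iff]

theorem T123_T145_T246_T356_mk (ha : a = z + t + z * s * t) (hb : b = x + z + x * y * z)
    (hp : p = y * a + s * t + y * r * s * t) (hq : q = x * y + s * b + x * y * r * s)
    (hm : m = x + a + x * p) (ha0 : a ≠ 0) (hp0 : p ≠ 0) (hm0 : m ≠ 0) :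
    T123 (T145 (T246 (T356 (x, y, z, r, s, t)))) =
      (x * y * r / q, q / m, y * r * z * s * m / (p * q), m, p / m, r * s * t / p) := by
  have key : x * p + z * s * m + x * y * r * (z * s) = a * q := by
    rw [hm, hp, hq, ha, hb]; ring
  rw [T145_T246_T356_mk ha hp hm ha0, T123_mk (d := q / m) (by field_simp; linear_combination key)]
  field_simp [Prod.ext_iff]

theorem T145_T123_mk (hb : b = x + z + x * y * z) (hq : q = x * y + s * b + x * y * r * s)
    (hb0 : b ≠ 0) :
    T145 (T123 (x, y, z, r, s, t)) = (x * y * r / q, b, y * z / b, q / b, r * s * b / q, t) := by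
  rw [T123_mk hb.symm, T145_mk (d := q / b) (by rw [hq]; field_simp)]
  field_simp [Prod.ext_iff]

theorem T356_T246_T145_T123_mk (ha : a = z + t + z * s * t) (hb : b = x + z + x * y * z)
    (hp : p = y * a + s * t + y * r * s * t) (hq : q = x * y + s * b + x * y * r * s)
    (hm : m = x + a + x * p) (hb0 : b ≠ 0) (hq0 : q ≠ 0) (hm0 : m ≠ 0) :
    T356 (T246 (T145 (T123 (x, y, z, r, s, t)))) =
      (x * y * r / q, q / m, y * r * z * s * m / (p * q), m, p / m, r * s * t / p) := by
  have hm' : b + t + b * (q / b) * t = m := by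
    field_simp; rw [hm, hp, hq, ha, hb]; ring
  have key : y * z * m + q * t + y * z * (r * s * t) = b * p := by
    rw [hm, hp, hq, ha, hb]; ring
  rw [T145_T123_mk hb hq hb0, T246_mk hm', T356_mk (d := p / m) (by field_simp; linear_combination key)]
  field_simp [Prod.ext_iff]

end

theorem ok145_iff (v : V6) : ok145 v ↔ (T145 v).2.2.2.1 ≠ 0 := Iff.rfl

theorem ok246_iff (v : V6) : ok246 v ↔ (T246 v).2.2.2.1 ≠ 0 := Iff.rfl

theorem star_triangle_tetrahedron_general (v : V6)
    (h1 : ok356 v) (h2 : ok246 (T356 v)) (h3 : ok145 (T246 (T356 v)))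
    (h1' : ok123 v) (h2' : ok145 (T123 v)) :
    T123 (T145 (T246 (T356 v))) = T356 (T246 (T145 (T123 v))) := by
  obtain ⟨x, y, z, r, s, t⟩ := v
  set a := z + t + z * s * t with ha
  set b := x + z + x * y * z with hb
  set p := y * a + s * t + y * r * s * t with hp
  set q := x * y + s * b + x * y * r * s with hq
  set m := x + a + x * p with hm
  have ha0 : a ≠ 0 := h1
  have hb0 : b ≠ 0 := h1'
  have hp0 : p ≠ 0 := by
    rw [ok246_iff, T246_T356_mk ha hp ha0] at h2
    exact (div_ne_zero_iff.mp h2).1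
  have hq0 : q ≠ 0 := by
    rw [ok145_iff, T145_T123_mk hb hq hb0] at h2'
    exact (div_ne_zero_iff.mp h2').1
  have hm0 : m ≠ 0 := by
    rwa [ok145_iff, T145_T246_T356_mk ha hp hm ha0] at h3
  rw [T123_T145_T246_T356_mk ha hb hp hq hm ha0 hp0 hm0,
    T356_T246_T145_T123_mk ha hb hp hq hm hb0 hq0 hm0]

theorem star_triangle_tetrahedron (v : V6)
    (h1 : ok356 v) (h2 : ok246 (T356 v)) (h3 : ok145 (T246 (T356 v)))
    (h4 : ok123 (T145 (T246 (T356 v))))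
    (h1' : ok123 v) (h2' : ok145 (T123 v)) (h3' : ok246 (T145 (T123 v)))
    (h4' : ok356 (T246 (T145 (T123 v)))) :
    T123 (T145 (T246 (T356 v))) = T356 (T246 (T145 (T123 v))) :=
  star_triangle_tetrahedron_general v h1 h2 h3 h1' h2'
end

section
/- The parametric six-dimensional NLS map T_{a,b,c} (defined in the previous context) admits the invariants I₁ = (a+x₁x₂)(b+y₁y₂), I₂ = (b+y₁y₂)(c+z₁z₂), and I₃ = a y₁y₂ + (x₂y₁+z₁)(x₁y₂+z₂): i.e. if (u₁,u₂,v₁,v₂,w₁,w₂) = T_{a,b,c}(x₁,x₂,y₁,y₂,z₁,z₂), then (a+u₁u₂)(b+v₁v₂) = (a+x₁x₂)(b+y₁y₂), (b+v₁v₂)(c+w₁w₂) = (b+y₁y₂)(c+z₁z₂), and a v₁v₂ + (u₂v₁+w₁)(u₁v₂+w₂) = a y₁y₂ + (x₂y₁+z₁)(x₁y₂+z₂). -/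
/-!
The denominator factors as `E = a c (b + v₁ v₂)`, so `u₂` and `w₁` are quotients by `b + v₁ v₂`
(and `a`). After clearing the denominators `a`, `c` and `b + v₁ v₂`, each invariance becomes a
polynomial identity.
-/

set_option linter.unusedVariables false

/-- The denominator E of the six-dimensional parametric NLS map. -/
noncomputable def En (a b c x1 x2 y1 y2 z1 z2 : ℂ) : ℂ :=
  a*b*c - (x2*z2 + y2*(a+x1*x2))*(b*x1*z1 - y1*(c+z1*z2))

noncomputable def u1f (a b c x1 x2 y1 y2 z1 z2 : ℂ) : ℂ := (b*x1 - y1*z2)/c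
noncomputable def u2f (a b c x1 x2 y1 y2 z1 z2 : ℂ) : ℂ :=
  a*c*(x2*(c+z1*z2) + y2*z1*(a+x1*x2))/(En a b c x1 x2 y1 y2 z1 z2)
noncomputable def v1f (a b c x1 x2 y1 y2 z1 z2 : ℂ) : ℂ :=
  (y1*(c+z1*z2) - b*x1*z1)/(a*c)
noncomputable def v2f (a b c x1 x2 y1 y2 z1 z2 : ℂ) : ℂ :=
  x2*z2 + y2*(a+x1*x2)
noncomputable def w1f (a b c x1 x2 y1 y2 z1 z2 : ℂ) : ℂ :=
  c*(b*z1*(a+x1*x2) - x2*y1*(c+z1*z2))/(En a b c x1 x2 y1 y2 z1 z2)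
noncomputable def w2f (a b c x1 x2 y1 y2 z1 z2 : ℂ) : ℂ := x1*y2 + z2

section
variable {a b c x1 x2 y1 y2 z1 z2 : ℂ}

theorem En_eq_mul (ha : a ≠ 0) (hc : c ≠ 0) :
    En a b c x1 x2 y1 y2 z1 z2
      = a * c * (b + v1f a b c x1 x2 y1 y2 z1 z2 * v2f a b c x1 x2 y1 y2 z1 z2) := by
  unfold En v1f v2f
  field_simp
  ring

theorem u2f_eq_div (ha : a ≠ 0) (hc : c ≠ 0) :
    u2f a b c x1 x2 y1 y2 z1 z2 = (x2 * (c + z1 * z2) + y2 * z1 * (a + x1 * x2))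
      / (b + v1f a b c x1 x2 y1 y2 z1 z2 * v2f a b c x1 x2 y1 y2 z1 z2) := by
  rw [u2f, En_eq_mul ha hc, mul_div_mul_left _ _ (mul_ne_zero ha hc)]

theorem w1f_eq_div (ha : a ≠ 0) (hc : c ≠ 0) :
    w1f a b c x1 x2 y1 y2 z1 z2 = (b * z1 * (a + x1 * x2) - x2 * y1 * (c + z1 * z2))
      / (a * (b + v1f a b c x1 x2 y1 y2 z1 z2 * v2f a b c x1 x2 y1 y2 z1 z2)) := by
  rw [w1f, En_eq_mul ha hc, mul_comm a c, mul_assoc c a, mul_div_mul_left _ _ hc]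

theorem add_v1f_mul_v2f_ne_zero (ha : a ≠ 0) (hc : c ≠ 0) (hE : En a b c x1 x2 y1 y2 z1 z2 ≠ 0) :
    b + v1f a b c x1 x2 y1 y2 z1 z2 * v2f a b c x1 x2 y1 y2 z1 z2 ≠ 0 := by
  rw [En_eq_mul ha hc] at hE
  exact right_ne_zero_of_mul hE

theorem nls6d_invariant₁ (ha : a ≠ 0) (hc : c ≠ 0) (hE : En a b c x1 x2 y1 y2 z1 z2 ≠ 0) :
    (a + u1f a b c x1 x2 y1 y2 z1 z2 * u2f a b c x1 x2 y1 y2 z1 z2)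
      * (b + v1f a b c x1 x2 y1 y2 z1 z2 * v2f a b c x1 x2 y1 y2 z1 z2)
      = (a + x1*x2) * (b + y1*y2) := by
  have hP := add_v1f_mul_v2f_ne_zero ha hc hE
  rw [u2f_eq_div ha hc]
  field_simp
  unfold u1f v1f v2f
  field_simp
  ring

theorem nls6d_invariant₂ (ha : a ≠ 0) (hc : c ≠ 0) (hE : En a b c x1 x2 y1 y2 z1 z2 ≠ 0) :
    (b + v1f a b c x1 x2 y1 y2 z1 z2 * v2f a b c x1 x2 y1 y2 z1 z2)
      * (c + w1f a b c x1 x2 y1 y2 z1 z2 * w2f a b c x1 x2 y1 y2 z1 z2)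
      = (b + y1*y2) * (c + z1*z2) := by
  have hP := add_v1f_mul_v2f_ne_zero ha hc hE
  rw [w1f_eq_div ha hc]
  field_simp
  unfold w2f v1f v2f
  field_simp
  ring

theorem nls6d_invariant₃ (ha : a ≠ 0) (hc : c ≠ 0) (hE : En a b c x1 x2 y1 y2 z1 z2 ≠ 0) :
    a * (v1f a b c x1 x2 y1 y2 z1 z2 * v2f a b c x1 x2 y1 y2 z1 z2)
      + (u2f a b c x1 x2 y1 y2 z1 z2 * v1f a b c x1 x2 y1 y2 z1 z2
          + w1f a b c x1 x2 y1 y2 z1 z2)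
        * (u1f a b c x1 x2 y1 y2 z1 z2 * v2f a b c x1 x2 y1 y2 z1 z2
          + w2f a b c x1 x2 y1 y2 z1 z2)
      = a*(y1*y2) + (x2*y1 + z1)*(x1*y2 + z2) := by
  have hP := add_v1f_mul_v2f_ne_zero ha hc hE
  rw [u2f_eq_div ha hc, w1f_eq_div ha hc]
  field_simp
  unfold u1f w2f v1f v2f
  field_simp
  ring
end

theorem nls6d_invariants_general (a b c x1 x2 y1 y2 z1 z2 : ℂ)
    (ha : a ≠ 0) (hc : c ≠ 0)
    (hE : En a b c x1 x2 y1 y2 z1 z2 ≠ 0) :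
    (a + u1f a b c x1 x2 y1 y2 z1 z2 * u2f a b c x1 x2 y1 y2 z1 z2)
      * (b + v1f a b c x1 x2 y1 y2 z1 z2 * v2f a b c x1 x2 y1 y2 z1 z2)
      = (a + x1*x2) * (b + y1*y2) ∧
    (b + v1f a b c x1 x2 y1 y2 z1 z2 * v2f a b c x1 x2 y1 y2 z1 z2)
      * (c + w1f a b c x1 x2 y1 y2 z1 z2 * w2f a b c x1 x2 y1 y2 z1 z2)
      = (b + y1*y2) * (c + z1*z2) ∧
    a * (v1f a b c x1 x2 y1 y2 z1 z2 * v2f a b c x1 x2 y1 y2 z1 z2)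
      + (u2f a b c x1 x2 y1 y2 z1 z2 * v1f a b c x1 x2 y1 y2 z1 z2
          + w1f a b c x1 x2 y1 y2 z1 z2)
        * (u1f a b c x1 x2 y1 y2 z1 z2 * v2f a b c x1 x2 y1 y2 z1 z2
          + w2f a b c x1 x2 y1 y2 z1 z2)
      = a*(y1*y2) + (x2*y1 + z1)*(x1*y2 + z2) :=
  ⟨nls6d_invariant₁ ha hc hE, nls6d_invariant₂ ha hc hE, nls6d_invariant₃ ha hc hE⟩

theorem nls6d_invariants (a b c x1 x2 y1 y2 z1 z2 : ℂ)
    (ha : a ≠ 0) (hb : b ≠ 0) (hc : c ≠ 0)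
    (hE : En a b c x1 x2 y1 y2 z1 z2 ≠ 0) :
    (a + u1f a b c x1 x2 y1 y2 z1 z2 * u2f a b c x1 x2 y1 y2 z1 z2)
      * (b + v1f a b c x1 x2 y1 y2 z1 z2 * v2f a b c x1 x2 y1 y2 z1 z2)
      = (a + x1*x2) * (b + y1*y2) ∧
    (b + v1f a b c x1 x2 y1 y2 z1 z2 * v2f a b c x1 x2 y1 y2 z1 z2)
      * (c + w1f a b c x1 x2 y1 y2 z1 z2 * w2f a b c x1 x2 y1 y2 z1 z2)
      = (b + y1*y2) * (c + z1*z2) ∧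
    a * (v1f a b c x1 x2 y1 y2 z1 z2 * v2f a b c x1 x2 y1 y2 z1 z2)
      + (u2f a b c x1 x2 y1 y2 z1 z2 * v1f a b c x1 x2 y1 y2 z1 z2
          + w1f a b c x1 x2 y1 y2 z1 z2)
        * (u1f a b c x1 x2 y1 y2 z1 z2 * v2f a b c x1 x2 y1 y2 z1 z2
          + w2f a b c x1 x2 y1 y2 z1 z2)
      = a*(y1*y2) + (x2*y1 + z1)*(x1*y2 + z2) :=
  nls6d_invariants_general a b c x1 x2 y1 y2 z1 z2 ha hc hE
end

section
/- The six-dimensional parametric NLS map T_{a,b,c} (as above) has the Lax representation M_{12}(u₁,u₂;a) M_{13}(v₁,v₂;b) M_{23}(w₁,w₂;c) = M_{23}(z₁,z₂;c) M_{13}(y₁,y₂;b) M_{12}(x₁,x₂;a), where M(x₁,x₂;a) = [[a+x₁x₂, x₁],[x₂, 1]] and M_{ij} are its 3×3 embeddings. -/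
set_option linter.unusedVariables false

noncomputable def M12 (x1 x2 a : ℂ) : Matrix (Fin 3) (Fin 3) ℂ :=
  !![a + x1*x2, x1, 0; x2, 1, 0; 0, 0, 1]
noncomputable def M13 (x1 x2 a : ℂ) : Matrix (Fin 3) (Fin 3) ℂ :=
  !![a + x1*x2, 0, x1; 0, 1, 0; x2, 0, 1]
noncomputable def M23 (x1 x2 a : ℂ) : Matrix (Fin 3) (Fin 3) ℂ :=
  !![1, 0, 0; 0, a + x1*x2, x1; 0, x2, 1]

/-!
Both sides of the Lax equation multiply out to matrices with third row `[v₂, w₂, 1]`. The key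
identity is `b + v₁ v₂ = E / (a c)`: it cancels the denominator of `u₂`, making `u₂ (b + v₁ v₂)`
polynomial, which gives the `(2,1)` and `(1,1)` entries. The `(1,3)`, `(1,2)` and `(2,2)` entries then
reduce to the `(2,3)` entry `w₁ + u₂ v₁ = z₁` and to `u₁ z₁ + a v₁ = y₁`.
-/

open Matrix

theorem M12_mul_M13_mul_M23 (u1 u2 v1 v2 w1 w2 a b c : ℂ) :
    M12 u1 u2 a * M13 v1 v2 b * M23 w1 w2 c =
      !![(a + u1*u2) * (b + v1*v2), u1 * (c + w1*w2) + (a + u1*u2) * v1 * w2,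
          u1 * w1 + (a + u1*u2) * v1;
        u2 * (b + v1*v2), c + w1*w2 + u2 * v1 * w2, w1 + u2 * v1;
        v2, w2, 1] := by
  ext i j
  fin_cases i <;> fin_cases j <;>
    simp [M12, M13, M23, Matrix.mul_apply, Fin.sum_univ_succ]

theorem M23_mul_M13_mul_M12 (z1 z2 y1 y2 x1 x2 c b a : ℂ) :
    M23 z1 z2 c * M13 y1 y2 b * M12 x1 x2 a =
      !![(b + y1*y2) * (a + x1*x2), (b + y1*y2) * x1, y1;
        z1 * y2 * (a + x1*x2) + (c + z1*z2) * x2, z1 * y2 * x1 + (c + z1*z2), z1;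
        y2 * (a + x1*x2) + z2 * x2, y2 * x1 + z2, 1] := by
  ext i j
  fin_cases i <;> fin_cases j <;>
    simp [M12, M13, M23, Matrix.mul_apply, Fin.sum_univ_succ]

section NLSMap

variable {a b c x1 x2 y1 y2 z1 z2 : ℂ}

local notation "E" => En a b c x1 x2 y1 y2 z1 z2
local notation "u₁" => u1f a b c x1 x2 y1 y2 z1 z2
local notation "u₂" => u2f a b c x1 x2 y1 y2 z1 z2
local notation "v₁" => v1f a b c x1 x2 y1 y2 z1 z2
local notation "v₂" => v2f a b c x1 x2 y1 y2 z1 z2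
local notation "w₁" => w1f a b c x1 x2 y1 y2 z1 z2

theorem u1f_mul (hc : c ≠ 0) : u₁ * c = b * x1 - y1 * z2 := by
  unfold u1f
  field_simp

theorem u1f_mul_add_mul_v1f (ha : a ≠ 0) (hc : c ≠ 0) : u₁ * z1 + a * v₁ = y1 := by
  unfold u1f v1f
  field_simp
  ring

theorem b_add_v1f_mul_v2f (ha : a ≠ 0) (hc : c ≠ 0) : b + v₁ * v₂ = E / (a * c) := by
  unfold v1f v2f En
  field_simp
  ring

theorem u2f_mul_b_add_v1f_mul_v2f (ha : a ≠ 0) (hc : c ≠ 0) (hE : E ≠ 0) :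
    u₂ * (b + v₁ * v₂) = z1 * y2 * (a + x1*x2) + (c + z1*z2) * x2 := by
  rw [b_add_v1f_mul_v2f ha hc, u2f]
  field_simp
  ring

theorem a_add_u1f_mul_u2f_mul_b_add_v1f_mul_v2f (ha : a ≠ 0) (hc : c ≠ 0) (hE : E ≠ 0) :
    (a + u₁ * u₂) * (b + v₁ * v₂) = (b + y1*y2) * (a + x1*x2) := by
  rw [add_mul, mul_assoc, u2f_mul_b_add_v1f_mul_v2f ha hc hE, b_add_v1f_mul_v2f ha hc, u1f, En]
  field_simp
  ring

theorem w1f_add_u2f_mul_v1f (ha : a ≠ 0) (hc : c ≠ 0) (hE : E ≠ 0) : w₁ + u₂ * v₁ = z1 := by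
  unfold w1f u2f v1f
  field_simp
  unfold En
  ring

theorem u1f_mul_w1f_add_a_add_u1f_mul_u2f_mul_v1f (ha : a ≠ 0) (hc : c ≠ 0) (hE : E ≠ 0) :
    u₁ * w₁ + (a + u₁ * u₂) * v₁ = y1 := by
  calc u₁ * w₁ + (a + u₁ * u₂) * v₁ = u₁ * (w₁ + u₂ * v₁) + a * v₁ := by ring
    _ = u₁ * z1 + a * v₁ := by rw [w1f_add_u2f_mul_v1f ha hc hE]
    _ = y1 := u1f_mul_add_mul_v1f ha hc

end NLSMap

theorem nls6d_lax_general (a b c x1 x2 y1 y2 z1 z2 : ℂ)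
    (ha : a ≠ 0) (hc : c ≠ 0)
    (hE : En a b c x1 x2 y1 y2 z1 z2 ≠ 0) :
    M12 (u1f a b c x1 x2 y1 y2 z1 z2) (u2f a b c x1 x2 y1 y2 z1 z2) a
      * M13 (v1f a b c x1 x2 y1 y2 z1 z2) (v2f a b c x1 x2 y1 y2 z1 z2) b
      * M23 (w1f a b c x1 x2 y1 y2 z1 z2) (w2f a b c x1 x2 y1 y2 z1 z2) c
      = M23 z1 z2 c * M13 y1 y2 b * M12 x1 x2 a := by
  have hz := w1f_add_u2f_mul_v1f ha hc hE
  have hy := u1f_mul_w1f_add_a_add_u1f_mul_u2f_mul_v1f ha hc hE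
  have hu : u1f a b c x1 x2 y1 y2 z1 z2 * c = _ := u1f_mul hc
  rw [M12_mul_M13_mul_M23, M23_mul_M13_mul_M12]
  refine congrArg Matrix.of (vec3_eq (vec3_eq ?_ ?_ hy) (vec3_eq ?_ ?_ hz) (vec3_eq ?_ ?_ rfl))
  · exact a_add_u1f_mul_u2f_mul_b_add_v1f_mul_v2f ha hc hE
  · rw [w2f]
    linear_combination (x1*y2 + z2) * hy + hu
  · exact u2f_mul_b_add_v1f_mul_v2f ha hc hE
  · rw [w2f]
    linear_combination (x1*y2 + z2) * hz
  · rw [v2f]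
    ring
  · rw [w2f]
    ring

theorem nls6d_lax (a b c x1 x2 y1 y2 z1 z2 : ℂ)
    (ha : a ≠ 0) (hb : b ≠ 0) (hc : c ≠ 0)
    (hE : En a b c x1 x2 y1 y2 z1 z2 ≠ 0) :
    M12 (u1f a b c x1 x2 y1 y2 z1 z2) (u2f a b c x1 x2 y1 y2 z1 z2) a
      * M13 (v1f a b c x1 x2 y1 y2 z1 z2) (v2f a b c x1 x2 y1 y2 z1 z2) b
      * M23 (w1f a b c x1 x2 y1 y2 z1 z2) (w2f a b c x1 x2 y1 y2 z1 z2) c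
      = M23 z1 z2 c * M13 y1 y2 b * M12 x1 x2 a :=
  nls6d_lax_general a b c x1 x2 y1 y2 z1 z2 ha hc hE
end
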